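/- arXiv:1807.04404 — 4 statements merged into one kernel-verified Lean document; each statement's English description precedes it below -/
import Mathlib

section
/- For all real numbers r1, r2, y1, y2 with y1, y2 > 0, if r1 ≤ 2(1 + ln y1), r2 ≤ 2(1 + ln y2), and r1 ≠ r2, then r1 + (r1 − r2)/(e^{r1−r2} − 1) ≤ 2(1 + ln(y1 + y2)). -/
/-!
The hypotheses say `exp (rᵢ / 2) ≤ e * yᵢ` and the conclusion says `exp (r / 2) ≤ e * (y₁ + y₂)`,
so it suffices that `exp (r / 2) ≤ exp (r₁ / 2) + exp (r₂ / 2)`, i.e. that `r` is a smooth maximum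
of `r₁, r₂`. With `u = (r₁ - r₂) / 2 > 0` this reads `exp t ≤ 1 + exp (-u)` for
`t = u / (exp (2 * u) - 1)`, which follows from `exp t ≤ 1 / (1 - t)` because
`u ≤ exp u - 1` gives `t ≤ 1 / (exp u + 1)`.
-/

open Real

/-- At `r₁ = r₂` division by zero makes this `r₁`, not the continuous extension `r₁ + 1`. -/
noncomputable def twoPointRatio (r₁ r₂ : ℝ) : ℝ :=
  r₁ + (r₁ - r₂) / (exp (r₁ - r₂) - 1)

theorem twoPointRatio_comm (r₁ r₂ : ℝ) : twoPointRatio r₁ r₂ = twoPointRatio r₂ r₁ := by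
  rcases eq_or_ne r₁ r₂ with rfl | h
  · rfl
  have h₁ : exp (r₁ - r₂) - 1 ≠ 0 := by
    rwa [sub_ne_zero, Ne, exp_eq_one_iff, sub_eq_zero]
  have h₂ : exp (r₂ - r₁) - 1 ≠ 0 := by
    rwa [sub_ne_zero, Ne, exp_eq_one_iff, sub_eq_zero, eq_comm]
  have hprod : exp (r₁ - r₂) * exp (r₂ - r₁) = 1 := by
    rw [← exp_add]; simp
  unfold twoPointRatio
  field_simp
  linear_combination (r₁ - r₂) * hprod

theorem exp_div_exp_two_mul_sub_one_le {u : ℝ} (hu : 0 < u) :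
    exp (u / (exp (2 * u) - 1)) ≤ 1 + exp (-u) := by
  set E := exp u
  have hE : 1 < E := one_lt_exp_iff.mpr hu
  have hE2 : exp (2 * u) = E * E := by rw [two_mul, exp_add]
  have hden : 0 < exp (2 * u) - 1 := by rw [hE2]; nlinarith
  set t := u / (exp (2 * u) - 1)
  have ht : t ≤ 1 / (E + 1) := by
    rw [div_le_div_iff₀ hden (by linarith), hE2]
    nlinarith [add_one_le_exp u]
  have hlt : 1 / (E + 1) < 1 := by rw [div_lt_one (by linarith)]; linarith
  calc exp t ≤ 1 / (1 - t) := exp_bound_div_one_sub_of_interval (by positivity) (by linarith)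
    _ ≤ 1 / (1 - 1 / (E + 1)) := by gcongr
    _ = 1 + E⁻¹ := by field_simp [(zero_lt_one.trans hE).ne']; ring
    _ = 1 + exp (-u) := by rw [exp_neg]

theorem exp_half_twoPointRatio_le_of_lt {r₁ r₂ : ℝ} (h : r₂ < r₁) :
    exp (twoPointRatio r₁ r₂ / 2) ≤ exp (r₁ / 2) + exp (r₂ / 2) := by
  have key := exp_div_exp_two_mul_sub_one_le (half_pos (sub_pos.mpr h))
  rw [mul_div_cancel₀ _ two_ne_zero] at key
  calc exp (twoPointRatio r₁ r₂ / 2)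
      = exp (r₁ / 2) * exp ((r₁ - r₂) / 2 / (exp (r₁ - r₂) - 1)) := by
        rw [← exp_add, twoPointRatio]; congr 1; ring
    _ ≤ exp (r₁ / 2) * (1 + exp (-((r₁ - r₂) / 2))) := by gcongr
    _ = exp (r₁ / 2) + exp (r₂ / 2) := by
        rw [mul_one_add, ← exp_add]; congr 2; ring

theorem exp_half_twoPointRatio_le (r₁ r₂ : ℝ) :
    exp (twoPointRatio r₁ r₂ / 2) ≤ exp (r₁ / 2) + exp (r₂ / 2) := by
  wlog h : r₂ ≤ r₁ generalizing r₁ r₂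
  · rw [twoPointRatio_comm, add_comm]
    exact this r₂ r₁ (le_of_not_ge h)
  rcases h.eq_or_lt with rfl | h
  · simp only [twoPointRatio, sub_self, zero_div, add_zero]
    exact le_add_of_nonneg_right (exp_pos _).le
  · exact exp_half_twoPointRatio_le_of_lt h

theorem le_two_mul_one_add_log_iff {r y : ℝ} (hy : 0 < y) :
    r ≤ 2 * (1 + log y) ↔ exp (r / 2) ≤ exp 1 * y := by
  rw [← exp_log hy, ← exp_add, exp_le_exp, log_exp, div_le_iff₀' two_pos]

theorem two_point_ratio_smooth_max_general (r1 r2 y1 y2 : ℝ) (hy1 : 0 < y1) (hy2 : 0 < y2)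
    (h1 : r1 ≤ 2 * (1 + Real.log y1)) (h2 : r2 ≤ 2 * (1 + Real.log y2)) :
    r1 + (r1 - r2) / (Real.exp (r1 - r2) - 1) ≤ 2 * (1 + Real.log (y1 + y2)) := by
  rw [le_two_mul_one_add_log_iff hy1] at h1
  rw [le_two_mul_one_add_log_iff hy2] at h2
  rw [le_two_mul_one_add_log_iff (add_pos hy1 hy2)]
  calc exp (twoPointRatio r1 r2 / 2)
      ≤ exp (r1 / 2) + exp (r2 / 2) := exp_half_twoPointRatio_le r1 r2
    _ ≤ exp 1 * y1 + exp 1 * y2 := add_le_add h1 h2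
    _ = exp 1 * (y1 + y2) := by ring

/-- Smooth-max property of the two-point unfair MTS competitive ratio. -/
theorem two_point_ratio_smooth_max (r1 r2 y1 y2 : ℝ) (hy1 : 0 < y1) (hy2 : 0 < y2)
    (h1 : r1 ≤ 2 * (1 + Real.log y1)) (h2 : r2 ≤ 2 * (1 + Real.log y2))
    (hne : r1 ≠ r2) :
    r1 + (r1 - r2) / (Real.exp (r1 - r2) - 1) ≤ 2 * (1 + Real.log (y1 + y2)) :=
  two_point_ratio_smooth_max_general r1 r2 y1 y2 hy1 hy2 h1 h2
end

section
/- Let C : X → ℝ_+ be a cost function on a finite set X, let T := max_{x∈X} C(x), and define c(t)(x) := 1{C(x) ≥ t} for t ∈ [0, T]. Then for any piecewise-continuous path ρ : [0, T] → X (with finitely many jumps), ∫_0^T c(t)(ρ(t)) dt ≥ min_{t ∈ [0,T]} C(ρ(t)). -/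
open MeasureTheory Set

/- Let `m` be the smallest cost met along the path on `[0, T]`. For `t ≤ m` we have
`t ≤ m ≤ C (ρ t)`, so the integrand is `1` on `[0, m]`; being nonnegative elsewhere, its integral
over `[0, T] ⊇ [0, m]` is at least `m`. Integrability holds because on each piece where `ρ` is
constant the integrand is the indicator of a half-line. -/

theorem Ioc_subset_range_union_iUnion_Ioo {α : Type*} [LinearOrder α] :
    ∀ {k : ℕ} (s : Fin (k + 1) → α),
      Ioc (s 0) (s (Fin.last k)) ⊆ range s ∪ ⋃ j : Fin k, Ioo (s j.castSucc) (s j.succ)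
  | 0, s, t, ht => absurd ht.2 (not_le.2 ht.1)
  | k + 1, s, t, ⟨hst, hts⟩ => by
    rcases le_or_gt t (s (Fin.last k).castSucc) with hle | hlt
    · rcases Ioc_subset_range_union_iUnion_Ioo (s ∘ Fin.castSucc) ⟨hst, hle⟩ with
        ⟨i, rfl⟩ | hmem
      · exact Or.inl ⟨i.castSucc, rfl⟩
      · obtain ⟨j, hj⟩ := mem_iUnion.1 hmem
        refine Or.inr (mem_iUnion.2 ⟨j.castSucc, ?_⟩)
        simpa only [Function.comp_apply, Fin.succ_castSucc] using hj
    · rcases hts.eq_or_lt with rfl | hts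
      · exact Or.inl ⟨_, rfl⟩
      · exact Or.inr (mem_iUnion.2 ⟨Fin.last k, hlt, hts⟩)

theorem integrableOn_Ioc_of_integrableOn_Ioo {E : Type*} [NormedAddCommGroup E] {μ : Measure ℝ}
    [NullSingletonClass μ] {k : ℕ} {s : Fin (k + 1) → ℝ} {f : ℝ → E}
    (hf : ∀ j : Fin k, IntegrableOn f (Ioo (s j.castSucc) (s j.succ)) μ) :
    IntegrableOn f (Ioc (s 0) (s (Fin.last k))) μ := by
  refine IntegrableOn.mono_set ?_ (Ioc_subset_range_union_iUnion_Ioo s)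
  refine IntegrableOn.union ?_ (integrableOn_finite_iUnion.2 hf)
  exact .of_measure_zero ((finite_range s).measure_zero μ)

theorem integrableOn_ite_le_of_forall_eq {X : Type*} (C : X → ℝ) {ρ : ℝ → X} {a b : ℝ}
    (hρ : ∀ t₁ ∈ Ioo a b, ∀ t₂ ∈ Ioo a b, ρ t₁ = ρ t₂) :
    IntegrableOn (fun t => if t ≤ C (ρ t) then (1 : ℝ) else 0) (Ioo a b) := by
  rcases (Ioo a b).eq_empty_or_nonempty with hempty | ⟨t₀, ht₀⟩
  · simp [hempty]
  have hind : IntegrableOn ((Iic (C (ρ t₀))).indicator fun _ => (1 : ℝ)) (Ioo a b) :=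
    (integrableOn_const measure_Ioo_lt_top.ne).indicator measurableSet_Iic
  refine hind.congr_fun (fun t ht => ?_) measurableSet_Ioo
  simp [indicator, hρ t ht t₀ ht₀]

theorem sub_le_intervalIntegral_of_eqOn_one {f : ℝ → ℝ} {a c b : ℝ} (hac : a ≤ c) (hcb : c ≤ b)
    (hf0 : 0 ≤ f) (hf1 : EqOn f 1 (Icc a c)) (hfi : IntervalIntegrable f volume a b) :
    c - a ≤ ∫ t in a..b, f t :=
  calc c - a = ∫ t in a..c, f t := by
        rw [intervalIntegral.integral_congr (g := fun _ => (1 : ℝ)) (by rwa [uIcc_of_le hac])]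
        simp
    _ ≤ ∫ t in a..b, f t :=
        intervalIntegral.integral_mono_interval le_rfl hac hcb (.of_forall hf0) hfi

theorem waterfilling_general {X : Type*} [Fintype X] [Nonempty X] (C : X → ℝ)
    (hC : ∀ x, 0 ≤ C x)
    (T : ℝ) (hT : T = Finset.univ.sup' Finset.univ_nonempty C)
    (ρ : ℝ → X) (k : ℕ) (s : Fin (k+1) → ℝ)
    (hs0 : s 0 = 0) (hsT : s (Fin.last k) = T)
    (hconst : ∀ j : Fin k, ∀ t₁ ∈ Set.Ioo (s j.castSucc) (s j.succ),
        ∀ t₂ ∈ Set.Ioo (s j.castSucc) (s j.succ), ρ t₁ = ρ t₂) :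
    sInf ((fun t => C (ρ t)) '' Set.Icc 0 T) ≤
      ∫ t in (0:ℝ)..T, if t ≤ C (ρ t) then (1:ℝ) else 0 := by
  have hC_le_T : ∀ t, C (ρ t) ≤ T := fun t => hT ▸ Finset.le_sup' C (Finset.mem_univ _)
  have hT0 : 0 ≤ T := (hC _).trans (hC_le_T 0)
  have hcost_nonneg : ∀ c ∈ (fun t => C (ρ t)) '' Icc 0 T, 0 ≤ c := by
    rintro _ ⟨t, -, rfl⟩
    exact hC _
  set m := sInf ((fun t => C (ρ t)) '' Icc 0 T)
  have hm_le : ∀ t ∈ Icc 0 T, m ≤ C (ρ t) := fun t ht =>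
    csInf_le ⟨0, hcost_nonneg⟩ ⟨t, ht, rfl⟩
  have hmT : m ≤ T := (hm_le 0 ⟨le_rfl, hT0⟩).trans (hC_le_T 0)
  have hint : IntervalIntegrable (fun t => if t ≤ C (ρ t) then (1 : ℝ) else 0) volume 0 T := by
    rw [intervalIntegrable_iff_integrableOn_Ioc_of_le hT0]
    have := integrableOn_Ioc_of_integrableOn_Ioo fun j => integrableOn_ite_le_of_forall_eq C (hconst j)
    rwa [hs0, hsT] at this
  have := sub_le_intervalIntegral_of_eqOn_one (Real.sInf_nonneg hcost_nonneg) hmT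
    (fun t => by dsimp only; split_ifs <;> norm_num)
    (fun t ht => if_pos (ht.2.trans (hm_le t ⟨ht.1, ht.2.trans hmT⟩))) hint
  rwa [sub_zero] at this

/-- The waterfilling inequality: the integrated continuous service cost dominates
the smallest discrete cost encountered along a piecewise-constant path. -/
theorem waterfilling {X : Type*} [Fintype X] [Nonempty X] (C : X → ℝ)
    (hC : ∀ x, 0 ≤ C x)
    (T : ℝ) (hT : T = Finset.univ.sup' Finset.univ_nonempty C)
    (ρ : ℝ → X) (k : ℕ) (s : Fin (k+1) → ℝ) (hmono : Monotone s)
    (hs0 : s 0 = 0) (hsT : s (Fin.last k) = T)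
    (hconst : ∀ j : Fin k, ∀ t₁ ∈ Set.Ioo (s j.castSucc) (s j.succ),
        ∀ t₂ ∈ Set.Ioo (s j.castSucc) (s j.succ), ρ t₁ = ρ t₂) :
    sInf ((fun t => C (ρ t)) '' Set.Icc 0 T) ≤
      ∫ t in (0:ℝ)..T, if t ≤ C (ρ t) then (1:ℝ) else 0 :=
  waterfilling_general C hC T hT ρ k s hs0 hsT hconst
end

section
/- Let η_1, ..., η_n > 0, δ_1, ..., δ_n ∈ (0, 1/2], and c, ξ, x ∈ ℝ_+^n with ξ_i > 0 ⟹ x_i = 0, and μ ≥ 0. Suppose x'_i = (η_i / w_i)(x_i + δ_i)(μ − c_i + ξ_i) for weights w_i > 0 and that c_i ≥ ξ_i for all i. Then Σ_{i : x'_i ≤ 0} w_i |x'_i| ≤ ⟨η ⊙ x, c⟩ + ⟨η ⊙ δ, c − ξ⟩, where ⊙ denotes entrywise product. -/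
/-!
The bound holds coordinatewise. Multiplying the dynamics by `w i` gives
`w i * x' i = η i * (x i + δ i) * (μ - (c i - ξ i))`; as `μ ≥ 0` and `c i - ξ i ≥ 0`, its negative
part is at most `η i * (x i + δ i) * (c i - ξ i)`, which is the right-hand summand minus
`η i * x i * ξ i ≥ 0`.
-/

section

variable {α : Type*}

theorem ite_nonpos_mul_abs_le [Ring α] [LinearOrder α] [IsOrderedRing α] {w y a d μ : α}
    (ha : 0 ≤ a) (hd : 0 ≤ d) (hμ : 0 ≤ μ) (hy : w * y = a * (μ - d)) :
    (if y ≤ 0 then w * |y| else 0) ≤ a * d := by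
  split_ifs with hy0
  · rw [abs_of_nonpos hy0, mul_neg, hy, mul_sub, neg_sub]
    exact sub_le_self _ (mul_nonneg ha hμ)
  · exact mul_nonneg ha hd

theorem weighted_neg_movement_le [Field α] [LinearOrder α] [IsStrictOrderedRing α]
    {η δ w c ξ x μ y : α} (hη : 0 ≤ η) (hδ : 0 ≤ δ) (hw : w ≠ 0) (hx : 0 ≤ x) (hξ : 0 ≤ ξ)
    (hcξ : ξ ≤ c) (hμ : 0 ≤ μ) (hy : y = η / w * (x + δ) * (μ - c + ξ)) :
    (if y ≤ 0 then w * |y| else 0) ≤ η * x * c + η * δ * (c - ξ) :=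
  calc (if y ≤ 0 then w * |y| else 0)
      ≤ η * (x + δ) * (c - ξ) :=
        ite_nonpos_mul_abs_le (mul_nonneg hη (add_nonneg hx hδ)) (sub_nonneg.2 hcξ) hμ
          (by rw [hy]; field_simp; ring)
    _ ≤ η * x * c + η * δ * (c - ξ) := by linarith [mul_nonneg (mul_nonneg hη hx) hξ]

end

theorem neg_movement_bound_multi_general (n : ℕ) (η δ w c ξ x x' : Fin n → ℝ)
    (hη : ∀ i, 0 < η i) (hδ : ∀ i, δ i ∈ Set.Ioc (0:ℝ) (1/2))
    (hw : ∀ i, 0 < w i) (hξ : ∀ i, 0 ≤ ξ i)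
    (hx : ∀ i, 0 ≤ x i)
    (μ : ℝ) (hμ : 0 ≤ μ)
    (hdyn : ∀ i, x' i = (η i / w i) * (x i + δ i) * (μ - c i + ξ i))
    (hcξ : ∀ i, ξ i ≤ c i) :
    (∑ i, if x' i ≤ 0 then w i * |x' i| else 0) ≤
      (∑ i, η i * x i * c i) + ∑ i, η i * δ i * (c i - ξ i) := by
  rw [← Finset.sum_add_distrib]
  gcongr with i
  exact weighted_neg_movement_le (hη i).le (hδ i).1.le (hw i).ne' (hx i) (hξ i) (hcξ i) hμ
    (hdyn i)

/-- Instantaneous negative-movement bound for the multi-learning-rate mirror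
descent dynamics on the simplex. -/
theorem neg_movement_bound_multi (n : ℕ) (η δ w c ξ x x' : Fin n → ℝ)
    (hη : ∀ i, 0 < η i) (hδ : ∀ i, δ i ∈ Set.Ioc (0:ℝ) (1/2))
    (hw : ∀ i, 0 < w i) (hc : ∀ i, 0 ≤ c i) (hξ : ∀ i, 0 ≤ ξ i)
    (hx : ∀ i, 0 ≤ x i)
    (hcs : ∀ i, 0 < ξ i → x i = 0) (μ : ℝ) (hμ : 0 ≤ μ)
    (hdyn : ∀ i, x' i = (η i / w i) * (x i + δ i) * (μ - c i + ξ i))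
    (hcξ : ∀ i, ξ i ≤ c i) :
    (∑ i, if x' i ≤ 0 then w i * |x' i| else 0) ≤
      (∑ i, η i * x i * c i) + ∑ i, η i * δ i * (c i - ξ i) :=
  neg_movement_bound_multi_general n η δ w c ξ x x' hη hδ hw hξ hx μ hμ hdyn hcξ
end

section
/- Let w_i > 0, η > 0, δ ∈ (0,1/2], and suppose x ∈ ℝ_+^n with Σ_i x_i = 1, c ∈ ℝ_+^n, μ ≥ 0, ξ ∈ ℝ_+^n with c_i ≥ ξ_i, and x'_i = (η/w_i)(x_i + δ)(μ − c_i + ξ_i) with Σ_{i : x_i ≠ 0} x'_i = 0 and ξ_i > 0 ⟹ x_i = 0. Then Σ_{i : x'_i ≤ 0} w_i |x'_i| ≤ η ⟨x + δ·1, c − ξ⟩. -/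
/-! The bound holds term by term: where `x'ᵢ ≤ 0` we have
`wᵢ |x'ᵢ| = η (xᵢ + δ)(cᵢ - ξᵢ - μ)`, and `μ ≥ 0` only lowers this below `η (xᵢ + δ)(cᵢ - ξᵢ)`;
elsewhere the left term is `0` and the right one is nonnegative. -/

lemma ite_nonpos_mul_abs_le_of_eq_div_mul {w η a d μ y : ℝ} (hw : w ≠ 0) (hη : 0 ≤ η)
    (ha : 0 ≤ a) (hd : 0 ≤ d) (hμ : 0 ≤ μ) (hy : y = η / w * a * (μ - d)) :
    (if y ≤ 0 then w * |y| else 0) ≤ η * (a * d) := by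
  have hwy : w * y = η * a * (μ - d) := by
    rw [hy]
    field_simp
  have hηa : 0 ≤ η * a := mul_nonneg hη ha
  split_ifs with hy0
  · rw [abs_of_nonpos hy0]
    nlinarith [mul_nonneg hηa hμ]
  · positivity

theorem neg_movement_bound_star_general (n : ℕ) (w c ξ x x' : Fin n → ℝ) (η δ μ : ℝ)
    (hw : ∀ i, 0 < w i) (hη : 0 < η) (hδ0 : 0 < δ)
    (hx : ∀ i, 0 ≤ x i)
    (hμ : 0 ≤ μ) (hcξ : ∀ i, ξ i ≤ c i)
    (hdyn : ∀ i, x' i = (η / w i) * (x i + δ) * (μ - c i + ξ i)) :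
    (∑ i, if x' i ≤ 0 then w i * |x' i| else 0) ≤
      η * ∑ i, (x i + δ) * (c i - ξ i) := by
  rw [Finset.mul_sum]
  refine Finset.sum_le_sum fun i _ => ?_
  refine ite_nonpos_mul_abs_le_of_eq_div_mul (hw i).ne' hη.le (by linarith [hx i])
    (sub_nonneg.mpr (hcξ i)) hμ ?_
  rw [hdyn i]
  ring

/-- Instantaneous movement bound for entropic mirror descent on a weighted star. -/
theorem neg_movement_bound_star (n : ℕ) (w c ξ x x' : Fin n → ℝ) (η δ μ : ℝ)
    (hw : ∀ i, 0 < w i) (hη : 0 < η) (hδ0 : 0 < δ) (hδ : δ ≤ 1/2)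
    (hx : ∀ i, 0 ≤ x i) (hsum : ∑ i, x i = 1) (hc : ∀ i, 0 ≤ c i)
    (hμ : 0 ≤ μ) (hξ : ∀ i, 0 ≤ ξ i) (hcξ : ∀ i, ξ i ≤ c i)
    (hdyn : ∀ i, x' i = (η / w i) * (x i + δ) * (μ - c i + ξ i))
    (hstat : ∑ i ∈ Finset.univ.filter (fun i => x i ≠ 0), x' i = 0)
    (hcs : ∀ i, 0 < ξ i → x i = 0) :
    (∑ i, if x' i ≤ 0 then w i * |x' i| else 0) ≤
      η * ∑ i, (x i + δ) * (c i - ξ i) :=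
  neg_movement_bound_star_general n w c ξ x x' η δ μ hw hη hδ0 hx hμ hcξ hdyn
end
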